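/- With f(n) the number of n×n ordinary ASMs and f(u,u'|v,v') the number of (u,u'|v,v')-ASMs, for all 0 ≤ k ≤ n one has f(α_{n,k},α_{n,k}|α_{n,k},α_{n,k}) = f(k)·f(n−k) ≤ f(n), where α_{n,k} consists of k +1s followed by n−k −1s. -/

import Mathlib

/-- The nonzero entries of a list of integers alternate in sign. -/
def AltList (l : List ℤ) : Prop :=
  List.Chain' (fun x y => x * y = -1) (l.filter (· ≠ 0))

/-- A vector of ±1s. -/
def SignVec {p : ℕ} (w : Fin p → ℤ) : Prop := ∀ i, w i = 1 ∨ w i = -1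

/-- `A` is a (u,u'|v,v')-ASM: a (0,±1)-matrix such that in the bordered matrix
(u on top, u' on bottom, v on the left, v' on the right, zeros in corners)
the nonzero entries of each interior row and column alternate in sign. -/
def IsGASM {m n : ℕ} (u u' : Fin n → ℤ) (v v' : Fin m → ℤ)
    (A : Matrix (Fin m) (Fin n) ℤ) : Prop :=
  (∀ i j, A i j = 0 ∨ A i j = 1 ∨ A i j = -1) ∧
  (∀ i : Fin m, AltList (v i :: (List.ofFn fun j => A i j) ++ [v' i])) ∧
  (∀ j : Fin n, AltList (u j :: (List.ofFn fun i => A i j) ++ [u' j]))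

/-- Ordinary alternating sign matrix, via the bordered formulation with all borders −1. -/
def IsASM {n : ℕ} (A : Matrix (Fin n) (Fin n) ℤ) : Prop :=
  IsGASM (fun _ => -1) (fun _ => -1) (fun _ => -1) (fun _ => -1) A

/-- The vector with k entries +1 followed by n−k entries −1. -/
def alphaVec (n k : ℕ) : Fin n → ℤ := fun j => if (j : ℕ) < k then 1 else -1

/-- The number of n×n ordinary alternating sign matrices. -/
noncomputable def numASM (n : ℕ) : ℕ :=
  Set.ncard {A : Matrix (Fin n) (Fin n) ℤ | IsASM A}

/-!
Read along a line, the condition defining a bordered ASM says that the prefix sums of the line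
stay in `{0, -s}` and the total is `-s`, where `s = ±1` is the border value. With the borders
`α_{n,k}`, the first `k` rows have border `+1`, so their suffix sums are `≤ 0`, while the last
`n - k` columns have border `-1`, so their sums over the first `k` rows are `≥ 0`. Summing the
top-right corner both ways forces it to vanish, and by symmetry so does the bottom-left one.
Hence an `α_{n,k}`-ASM is exactly a block-diagonal matrix `(-A₁) ⊕ A₂` with `A₁`, `A₂`
ordinary ASMs, while `A₁ ⊕ A₂` is itself an `n × n` ASM.
-/

open Matrix

section AltList

variable {s : ℤ} {l : List ℤ}

theorem sum_take_eq_zero_or_of_isChain (hs : s = 1 ∨ s = -1)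
    (h : (s :: l.filter (· ≠ 0)).IsChain (fun x y => x * y = -1)) (m : ℕ) :
    (l.take m).sum = 0 ∨ (l.take m).sum = -s := by
  induction l generalizing s m with
  | nil => simp
  | cons x t ih =>
    rcases m with _ | m
    · simp
    by_cases hx : x = 0
    · simp only [hx] at h
      simpa [hx] using ih hs h m
    · rw [List.filter_cons_of_pos (by simpa using hx), List.isChain_cons_cons] at h
      have hxs : x = -s := by rcases hs with rfl | rfl <;> omega
      rcases ih (by omega) h.2 m with ht | ht <;> simp [ht, hxs]

theorem AltList.sum_take_append_eq_zero_or (hs : s = 1 ∨ s = -1) (h : AltList (s :: l ++ [s]))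
    (m : ℕ) : ((l ++ [s]).take m).sum = 0 ∨ ((l ++ [s]).take m).sum = -s := by
  have hs0 : s ≠ 0 := by omega
  simp only [AltList, List.cons_append, ne_eq, hs0, not_false_eq_true, decide_true,
    List.filter_cons_of_pos] at h
  exact sum_take_eq_zero_or_of_isChain hs h m

theorem AltList.sum_eq (hs : s = 1 ∨ s = -1) (h : AltList (s :: l ++ [s])) : l.sum = -s := by
  have hl := h.sum_take_append_eq_zero_or hs l.length
  have hls := h.sum_take_append_eq_zero_or hs (l.length + 1)
  simp only [List.take_left', List.take_of_length_le (by simp : (l ++ [s]).length ≤ l.length + 1),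
    List.sum_append, List.sum_singleton] at hl hls
  omega

theorem AltList.sum_take_eq_zero_or (hs : s = 1 ∨ s = -1) (h : AltList (s :: l ++ [s]))
    (m : ℕ) : (l.take m).sum = 0 ∨ (l.take m).sum = -s := by
  rcases le_or_gt m l.length with hm | hm
  · simpa [List.take_append_of_le_length hm] using h.sum_take_append_eq_zero_or hs m
  · rw [List.take_of_length_le hm.le]
    exact .inr (h.sum_eq hs)

theorem altList_map_neg : AltList (l.map (- ·)) ↔ AltList l := by
  simp only [AltList, List.filter_map]
  exact List.isChain_map _ |>.trans (by simp [Function.comp_def]; rfl)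

end AltList

section IsGASM

variable {m n : ℕ} {u u' : Fin n → ℤ} {v v' : Fin m → ℤ} {A : Matrix (Fin m) (Fin n) ℤ}

theorem IsGASM.transpose (h : IsGASM u u' v v' A) : IsGASM v v' u u' Aᵀ :=
  ⟨fun i j => h.1 j i, h.2.2, h.2.1⟩

theorem isGASM_neg_neg_iff : IsGASM (-u) (-u') (-v) (-v') (-A) ↔ IsGASM u u' v v' A := by
  refine and_congr (forall₂_congr fun i j => ?_) (and_congr (forall_congr' fun i => ?_)
    (forall_congr' fun j => ?_))
  · simp only [neg_apply]
    omega
  all_goals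
    rw [← altList_map_neg]
    simp [List.map_ofFn, Function.comp_def]

end IsGASM

theorem finite_setOf_isGASM {m n : ℕ} (u u' : Fin n → ℤ) (v v' : Fin m → ℤ) :
    {A : Matrix (Fin m) (Fin n) ℤ | IsGASM u u' v v' A}.Finite := by
  have hentries : ({0, 1, -1} : Set ℤ).Finite := Set.toFinite _
  refine (Set.Finite.pi fun _ => Set.Finite.pi fun _ => hentries).subset fun A hA => ?_
  simpa [Set.mem_pi] using hA.1

theorem isGASM_one_neg_iff {n : ℕ} {A : Matrix (Fin n) (Fin n) ℤ} :
    IsGASM 1 1 1 1 (-A) ↔ IsASM A := by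
  rw [IsASM, ← isGASM_neg_neg_iff]
  simp only [Pi.neg_def, neg_neg]
  rfl

theorem Fin.sum_filter_le_eq_add {M : Type*} [AddCommMonoid M] {n : ℕ} (f : Fin n → M)
    (j : Fin n) :
    ∑ j' ∈ Finset.univ.filter (fun j' : Fin n => (j : ℕ) ≤ j'), f j' =
      f j + ∑ j' ∈ Finset.univ.filter (fun j' : Fin n => (j : ℕ) + 1 ≤ j'), f j' := by
  rw [← Finset.add_sum_erase _ f (a := j) (by simp)]
  congr 2
  ext j'
  simp only [Finset.mem_erase, Finset.mem_filter, Finset.mem_univ, true_and, ne_eq,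
    Fin.ext_iff]
  omega

theorem Matrix.eq_zero_of_sum_suffix_nonpos {ι : Type*} {n : ℕ} (A : Matrix ι (Fin n) ℤ)
    (R : Finset ι) (k : ℕ)
    (hrow : ∀ i ∈ R, ∀ m : ℕ, ∑ j ∈ Finset.univ.filter (fun j : Fin n => m ≤ j), A i j ≤ 0)
    (hcol : ∀ j : Fin n, k ≤ (j : ℕ) → 0 ≤ ∑ i ∈ R, A i j) {i : ι} (hi : i ∈ R) {j : Fin n}
    (hj : k ≤ (j : ℕ)) : A i j = 0 := by
  have hsuffix (m : ℕ) (hm : k ≤ m) :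
      ∑ j ∈ Finset.univ.filter (fun j : Fin n => m ≤ j), A i j = 0 := by
    refine (Finset.sum_eq_zero_iff_of_nonpos fun i hi => hrow i hi m).1 ?_ i hi
    refine le_antisymm (Finset.sum_nonpos fun i hi => hrow i hi m) ?_
    calc 0 ≤ ∑ j ∈ Finset.univ.filter (fun j : Fin n => m ≤ j), ∑ i ∈ R, A i j :=
          Finset.sum_nonneg fun j hj => hcol j (hm.trans (Finset.mem_filter.1 hj).2)
      _ = _ := Finset.sum_comm
  have := Fin.sum_filter_le_eq_add (A i) j
  rwa [hsuffix _ hj, hsuffix _ (by omega), add_zero, eq_comm] at this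

theorem IsGASM.apply_eq_zero_of_lt_of_le {n k : ℕ} {A : Matrix (Fin n) (Fin n) ℤ}
    (h : IsGASM (alphaVec n k) (alphaVec n k) (alphaVec n k) (alphaVec n k) A) {i j : Fin n}
    (hi : (i : ℕ) < k) (hj : k ≤ (j : ℕ)) : A i j = 0 := by
  refine A.eq_zero_of_sum_suffix_nonpos (Finset.univ.filter fun i : Fin n => (i : ℕ) < k) k
    (fun i hi m => ?_) (fun j hj => ?_) (by simpa using hi) hj
  · have hrow : AltList (1 :: List.ofFn (A i) ++ [1]) := by
      simpa [alphaVec, (Finset.mem_filter.1 hi).2] using h.2.1 i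
    have htotal := hrow.sum_eq (.inl rfl)
    have hprefix := hrow.sum_take_eq_zero_or (.inl rfl) m
    have hsplit :=
      Finset.sum_filter_add_sum_filter_not .univ (fun j : Fin n => (j : ℕ) < m) (A i)
    rw [List.sum_ofFn] at htotal
    rw [List.sum_take_ofFn] at hprefix
    simp only [not_lt] at hsplit
    omega
  · have hcol : AltList (-1 :: List.ofFn (fun i => A i j) ++ [-1]) := by
      simpa [alphaVec, not_lt.2 hj] using h.2.2 j
    have := hcol.sum_take_eq_zero_or (.inr rfl) k
    rw [List.sum_take_ofFn] at this
    omega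

def Matrix.blockDiagFin {α : Type*} [Zero α] {m₁ m₂ n₁ n₂ : ℕ}
    (B₁ : Matrix (Fin m₁) (Fin n₁) α) (B₂ : Matrix (Fin m₂) (Fin n₂) α) :
    Matrix (Fin (m₁ + m₂)) (Fin (n₁ + n₂)) α :=
  reindex finSumFinEquiv finSumFinEquiv (fromBlocks B₁ 0 0 B₂)

section blockDiagFin

variable {α : Type*} [Zero α] {m₁ m₂ n₁ n₂ : ℕ} (B₁ : Matrix (Fin m₁) (Fin n₁) α)
  (B₂ : Matrix (Fin m₂) (Fin n₂) α)

@[simp] theorem Matrix.blockDiagFin_castAdd_castAdd (i : Fin m₁) (j : Fin n₁) :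
    blockDiagFin B₁ B₂ (Fin.castAdd m₂ i) (Fin.castAdd n₂ j) = B₁ i j := by
  simp [blockDiagFin]

@[simp] theorem Matrix.blockDiagFin_castAdd_natAdd (i : Fin m₁) (j : Fin n₂) :
    blockDiagFin B₁ B₂ (Fin.castAdd m₂ i) (Fin.natAdd n₁ j) = 0 := by
  simp [blockDiagFin]

@[simp] theorem Matrix.blockDiagFin_natAdd_castAdd (i : Fin m₂) (j : Fin n₁) :
    blockDiagFin B₁ B₂ (Fin.natAdd m₁ i) (Fin.castAdd n₂ j) = 0 := by
  simp [blockDiagFin]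

@[simp] theorem Matrix.blockDiagFin_natAdd_natAdd (i : Fin m₂) (j : Fin n₂) :
    blockDiagFin B₁ B₂ (Fin.natAdd m₁ i) (Fin.natAdd n₁ j) = B₂ i j := by
  simp [blockDiagFin]

theorem Matrix.blockDiagFin_inj {B₁' : Matrix (Fin m₁) (Fin n₁) α}
    {B₂' : Matrix (Fin m₂) (Fin n₂) α} :
    blockDiagFin B₁ B₂ = blockDiagFin B₁' B₂' ↔ B₁ = B₁' ∧ B₂ = B₂' := by
  rw [blockDiagFin, blockDiagFin, (reindex _ _).injective.eq_iff, fromBlocks_inj]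
  simp

end blockDiagFin

theorem isGASM_blockDiagFin_iff {m₁ m₂ n₁ n₂ : ℕ} {u u' : Fin (n₁ + n₂) → ℤ}
    {v v' : Fin (m₁ + m₂) → ℤ} (B₁ : Matrix (Fin m₁) (Fin n₁) ℤ)
    (B₂ : Matrix (Fin m₂) (Fin n₂) ℤ) :
    IsGASM u u' v v' (blockDiagFin B₁ B₂) ↔
      IsGASM (u ∘ Fin.castAdd n₂) (u' ∘ Fin.castAdd n₂) (v ∘ Fin.castAdd m₂)
          (v' ∘ Fin.castAdd m₂) B₁ ∧
        IsGASM (u ∘ Fin.natAdd n₁) (u' ∘ Fin.natAdd n₁) (v ∘ Fin.natAdd m₁)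
          (v' ∘ Fin.natAdd m₁) B₂ := by
  have ofFn_split {a b : ℕ} (f : Fin (a + b) → ℤ) : List.ofFn f =
      List.ofFn (fun i => f (Fin.castAdd b i)) ++ List.ofFn (fun i => f (Fin.natAdd a i)) :=
    List.ofFn_add
  simp only [IsGASM, Fin.forall_fin_add, ofFn_split]
  -- the zero blocks disappear once the zeros are filtered out of each line
  simp [AltList, List.filter_cons, List.filter_append]
  tauto

theorem isASM_blockDiagFin_iff {k l : ℕ} (B₁ : Matrix (Fin k) (Fin k) ℤ)
    (B₂ : Matrix (Fin l) (Fin l) ℤ) : IsASM (blockDiagFin B₁ B₂) ↔ IsASM B₁ ∧ IsASM B₂ :=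
  isGASM_blockDiagFin_iff B₁ B₂

theorem isGASM_alphaVec_blockDiagFin_neg_iff {k l : ℕ} (B₁ : Matrix (Fin k) (Fin k) ℤ)
    (B₂ : Matrix (Fin l) (Fin l) ℤ) :
    IsGASM (alphaVec (k + l) k) (alphaVec (k + l) k) (alphaVec (k + l) k) (alphaVec (k + l) k)
        (blockDiagFin (-B₁) B₂) ↔ IsASM B₁ ∧ IsASM B₂ := by
  have htop : alphaVec (k + l) k ∘ Fin.castAdd l = 1 := by
    funext i
    simp [alphaVec]
  have hbot : alphaVec (k + l) k ∘ Fin.natAdd k = fun _ => -1 := by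
    funext i
    simp [alphaVec]
  rw [isGASM_blockDiagFin_iff, htop, hbot, isGASM_one_neg_iff]
  rfl

theorem IsGASM.eq_blockDiagFin_submatrix {k l : ℕ} {A : Matrix (Fin (k + l)) (Fin (k + l)) ℤ}
    (h : IsGASM (alphaVec (k + l) k) (alphaVec (k + l) k) (alphaVec (k + l) k)
      (alphaVec (k + l) k) A) :
    A = blockDiagFin (A.submatrix (Fin.castAdd l) (Fin.castAdd l))
      (A.submatrix (Fin.natAdd k) (Fin.natAdd k)) := by
  ext i j
  induction i using Fin.addCases <;> induction j using Fin.addCases <;> simp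
  · exact h.apply_eq_zero_of_lt_of_le (by simp) (by simp)
  · exact h.transpose.apply_eq_zero_of_lt_of_le (by simp) (by simp)

theorem setOf_isGASM_alphaVec_eq_image (k l : ℕ) :
    {A : Matrix (Fin (k + l)) (Fin (k + l)) ℤ | IsGASM (alphaVec (k + l) k)
        (alphaVec (k + l) k) (alphaVec (k + l) k) (alphaVec (k + l) k) A} =
      (fun B => blockDiagFin (-B.1) B.2) ''
        ({B₁ : Matrix (Fin k) (Fin k) ℤ | IsASM B₁} ×ˢ
          {B₂ : Matrix (Fin l) (Fin l) ℤ | IsASM B₂}) := by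
  ext A
  constructor
  · intro (hA : IsGASM _ _ _ _ A)
    refine ⟨(-A.submatrix (Fin.castAdd l) (Fin.castAdd l),
      A.submatrix (Fin.natAdd k) (Fin.natAdd k)), ?_, ?_⟩
    · rw [hA.eq_blockDiagFin_submatrix, ← neg_neg (A.submatrix _ _),
        isGASM_alphaVec_blockDiagFin_neg_iff] at hA
      exact hA
    · simpa using hA.eq_blockDiagFin_submatrix.symm
  · rintro ⟨B, hB, rfl⟩
    exact (isGASM_alphaVec_blockDiagFin_neg_iff _ _).2 hB

theorem ncard_setOf_isGASM_alphaVec (k l : ℕ) :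
    {A : Matrix (Fin (k + l)) (Fin (k + l)) ℤ | IsGASM (alphaVec (k + l) k)
        (alphaVec (k + l) k) (alphaVec (k + l) k) (alphaVec (k + l) k) A}.ncard =
      numASM k * numASM l := by
  have hinj : Function.Injective
      fun B : Matrix (Fin k) (Fin k) ℤ × Matrix (Fin l) (Fin l) ℤ => blockDiagFin (-B.1) B.2 :=
    fun B B' hBB' => by
      rw [blockDiagFin_inj, neg_inj] at hBB'
      exact Prod.ext hBB'.1 hBB'.2
  rw [setOf_isGASM_alphaVec_eq_image, Set.ncard_image_of_injective _ hinj, Set.ncard_prod]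
  rfl

theorem numASM_mul_le_numASM_add (k l : ℕ) : numASM k * numASM l ≤ numASM (k + l) := by
  have hinj : Function.Injective
      fun B : Matrix (Fin k) (Fin k) ℤ × Matrix (Fin l) (Fin l) ℤ => blockDiagFin B.1 B.2 :=
    fun B B' hBB' => by
      rw [blockDiagFin_inj] at hBB'
      exact Prod.ext hBB'.1 hBB'.2
  rw [numASM, numASM, ← Set.ncard_prod, ← Set.ncard_image_of_injective _ hinj]
  refine Set.ncard_le_ncard ?_ (finite_setOf_isGASM _ _ _ _)
  rintro _ ⟨B, hB, rfl⟩
  exact (isASM_blockDiagFin_iff _ _).2 hB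

theorem stmt13 {n k : ℕ} (hk : k ≤ n) :
    Set.ncard {A : Matrix (Fin n) (Fin n) ℤ |
        IsGASM (alphaVec n k) (alphaVec n k) (alphaVec n k) (alphaVec n k) A} =
      numASM k * numASM (n - k) ∧
    numASM k * numASM (n - k) ≤ numASM n := by
  obtain ⟨l, rfl⟩ := Nat.exists_eq_add_of_le hk
  rw [Nat.add_sub_cancel_left]
  exact ⟨ncard_setOf_isGASM_alphaVec k l, numASM_mul_le_numASM_add k l⟩
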